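/- arXiv:2402.05360 — 8 statements merged into one kernel-verified Lean document; each statement's English description precedes it below -/
import Mathlib

section
/- Let T be an A-bounded operator on H and let p be a polynomial with complex coefficients of degree at least 1. Then σ_A(p(T)) = p(σ_A(T)) = {p(λ) : λ ∈ σ_A(T)}. -/
open ContinuousLinearMap Filter
open scoped ComplexOrder

set_option maxHeartbeats 1000000
set_option synthInstance.maxHeartbeats 1000000
set_option linter.unusedSectionVars false
set_option linter.unusedVariables false

noncomputable section

variable {H : Type*} [NormedAddCommGroup H] [InnerProductSpace ℂ H] [CompleteSpace H]

/-- The seminorm induced by a positive operator `A`: `‖x‖_A = √(re ⟪A x, x⟫)`. -/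
noncomputable def sNorm (A : H →L[ℂ] H) (x : H) : ℝ :=
  Real.sqrt ((inner ℂ (A x) x : ℂ)).re

/-- `T` is `A`-bounded: `‖T x‖_A ≤ c ‖x‖_A` for some `c > 0`. -/
def ABounded (A T : H →L[ℂ] H) : Prop :=
  ∃ c : ℝ, 0 < c ∧ ∀ x : H, sNorm A (T x) ≤ c * sNorm A x

/-- `T` is `A`-invertible: there is an `A`-bounded `S` with `ATS = AST = A`. -/
def AInvertible (A T : H →L[ℂ] H) : Prop :=
  ∃ S : H →L[ℂ] H, ABounded A S ∧ A ∘L T ∘L S = A ∧ A ∘L S ∘L T = A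

/-- The `A`-spectrum of `T`. -/
def ASpectrum (A T : H →L[ℂ] H) : Set ℂ :=
  {z : ℂ | ¬ AInvertible A (T - z • (1 : H →L[ℂ] H))}

/-- The `A`-numerical range of `T`: `{⟪T x, x⟫_A : ‖x‖_A = 1}`. -/
def ANumRange (A T : H →L[ℂ] H) : Set ℂ :=
  {z : ℂ | ∃ x : H, sNorm A x = 1 ∧ (inner ℂ (A (T x)) x : ℂ) = z}

/-- The `A`-numerical radius of `T`. -/
noncomputable def ANumRadius (A T : H →L[ℂ] H) : ℝ :=
  sSup ((fun z : ℂ => ‖z‖) '' ANumRange A T)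

/-- The `A`-operator seminorm of `T`. -/
noncomputable def AOpNorm (A T : H →L[ℂ] H) : ℝ :=
  sSup {r : ℝ | ∃ x : H, x ∈ closure (Set.range (⇑A)) ∧ x ≠ 0 ∧ r = sNorm A (T x) / sNorm A x}

/-- The `A`-point spectrum of `T`. -/
def APointSpectrum (A T : H →L[ℂ] H) : Set ℂ :=
  {z : ℂ | ∃ x : H, x ≠ 0 ∧ x ∈ closure (Set.range (⇑A)) ∧ A (T x) = z • A x}

/-- The `A`-approximate point spectrum of `T`. -/
def AAppSpectrum (A T : H →L[ℂ] H) : Set ℂ :=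
  {z : ℂ | ∃ x : ℕ → H, (∀ n, x n ∈ closure (Set.range (⇑A))) ∧ (∀ n, sNorm A (x n) = 1) ∧
    Filter.Tendsto (fun n => sNorm A ((T - z • (1 : H →L[ℂ] H)) (x n))) Filter.atTop (nhds 0)}

/-- `S` is the `A`-adjoint of `T`: `A S = T* A` and `range S ⊆ closure (range A)`. -/
def IsAAdjoint (A T S : H →L[ℂ] H) : Prop :=
  A ∘L S = (ContinuousLinearMap.adjoint T) ∘L A ∧
    Set.range (⇑S) ⊆ closure (Set.range (⇑A))

/-- `T` is `A`-normal: it has an `A`-adjoint `S` with `A S T = A T S`. -/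
def IsANormal (A T : H →L[ℂ] H) : Prop :=
  ∃ S : H →L[ℂ] H, IsAAdjoint A T S ∧ A ∘L S ∘L T = A ∘L T ∘L S

/-- `T` is bounded with respect to the seminorm `x ↦ ‖B x‖`. -/
def BBdd (B T : H →L[ℂ] H) : Prop := ∃ c : ℝ, 0 < c ∧ ∀ x, ‖B (T x)‖ ≤ c * ‖B x‖

/-- `T` is invertible with respect to the seminorm `x ↦ ‖B x‖`. -/
def BInv (B T : H →L[ℂ] H) : Prop :=
  ∃ S, BBdd B S ∧ (∀ x, B (T (S x)) = B x) ∧ (∀ x, B (S (T x)) = B x)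

variable {B : H →L[ℂ] H}

lemma bkey {T : H →L[ℂ] H} (hT : BBdd B T) {u v : H} (h : B u = B v) :
    B (T u) = B (T v) := by
  obtain ⟨c, hc, hT⟩ := hT
  have h0 : B (u - v) = 0 := by rw [map_sub, h, sub_self]
  have h1 : ‖B (T (u - v))‖ ≤ c * ‖B (u - v)‖ := hT (u - v)
  rw [h0, norm_zero, mul_zero] at h1
  have h2 : B (T (u - v)) = 0 := norm_le_zero_iff.mp h1
  rw [map_sub, map_sub] at h2
  exact sub_eq_zero.mp h2

lemma bbdd_one : BBdd B 1 := ⟨1, one_pos, fun x => by simp⟩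

lemma bbdd_mul {T T' : H →L[ℂ] H} (h : BBdd B T) (h' : BBdd B T') : BBdd B (T * T') := by
  obtain ⟨c, hc, h⟩ := h
  obtain ⟨c', hc', h'⟩ := h'
  refine ⟨c * c', mul_pos hc hc', fun x => ?_⟩
  calc ‖B ((T * T') x)‖ = ‖B (T (T' x))‖ := by rw [mul_apply_eq_comp]
    _ ≤ c * ‖B (T' x)‖ := h _
    _ ≤ c * (c' * ‖B x‖) := by
        exact mul_le_mul_of_nonneg_left (h' x) hc.le
    _ = c * c' * ‖B x‖ := by ring

lemma bbdd_add {T T' : H →L[ℂ] H} (h : BBdd B T) (h' : BBdd B T') : BBdd B (T + T') := by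
  obtain ⟨c, hc, h⟩ := h
  obtain ⟨c', hc', h'⟩ := h'
  refine ⟨c + c', by linarith, fun x => ?_⟩
  calc ‖B ((T + T') x)‖ = ‖B (T x) + B (T' x)‖ := by simp
    _ ≤ ‖B (T x)‖ + ‖B (T' x)‖ := norm_add_le _ _
    _ ≤ c * ‖B x‖ + c' * ‖B x‖ := add_le_add (h x) (h' x)
    _ = (c + c') * ‖B x‖ := by ring

lemma bbdd_smul {T : H →L[ℂ] H} (z : ℂ) (h : BBdd B T) : BBdd B (z • T) := by
  obtain ⟨c, hc, h⟩ := h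
  refine ⟨(‖z‖ + 1) * c, by positivity, fun x => ?_⟩
  calc ‖B ((z • T) x)‖ = ‖z‖ * ‖B (T x)‖ := by simp [norm_smul]
    _ ≤ ‖z‖ * (c * ‖B x‖) := mul_le_mul_of_nonneg_left (h x) (norm_nonneg z)
    _ ≤ (‖z‖ + 1) * (c * ‖B x‖) := by
        have : (0:ℝ) ≤ c * ‖B x‖ := by positivity
        nlinarith
    _ = (‖z‖ + 1) * c * ‖B x‖ := by ring

lemma bbdd_pow {T : H →L[ℂ] H} (h : BBdd B T) : ∀ n : ℕ, BBdd B (T ^ n)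
  | 0 => by simpa using bbdd_one
  | n + 1 => by rw [pow_succ]; exact bbdd_mul (bbdd_pow h n) h

lemma bbdd_aeval {T : H →L[ℂ] H} (h : BBdd B T) (f : Polynomial ℂ) :
    BBdd B (Polynomial.aeval T f) := by
  induction f using Polynomial.induction_on' with
  | add f g hf hg => rw [map_add]; exact bbdd_add hf hg
  | monomial n a =>
      rw [Polynomial.aeval_monomial, Algebra.algebraMap_eq_smul_one]
      have : (a • (1:H →L[ℂ] H)) * T ^ n = a • T ^ n := by
        rw [smul_mul_assoc, one_mul]
      rw [this]
      exact bbdd_smul a (bbdd_pow h n)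

lemma bbdd_prod {s : List (H →L[ℂ] H)} (h : ∀ f ∈ s, BBdd B f) : BBdd B s.prod := by
  induction s with
  | nil => simpa using bbdd_one
  | cons a s ih =>
      rw [List.prod_cons]
      exact bbdd_mul (h a List.mem_cons_self)
        (ih fun f hf => h f (List.mem_cons_of_mem a hf))

lemma binv_one : BInv B 1 := ⟨1, bbdd_one, fun x => by simp, fun x => by simp⟩

lemma binv_smul_one {z : ℂ} (hz : z ≠ 0) : BInv B (z • 1) := by
  refine ⟨z⁻¹ • 1, bbdd_smul _ bbdd_one, fun x => ?_, fun x => ?_⟩ <;>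
    simp [smul_smul, mul_inv_cancel₀ hz, inv_mul_cancel₀ hz]

lemma binv_mul {T T' : H →L[ℂ] H} (hT : BBdd B T) (hT' : BBdd B T')
    (h : BInv B T) (h' : BInv B T') : BInv B (T * T') := by
  obtain ⟨S, hS, h1, h2⟩ := h
  obtain ⟨S', hS', h1', h2'⟩ := h'
  refine ⟨S' * S, bbdd_mul hS' hS, fun x => ?_, fun x => ?_⟩
  · simp only [mul_apply_eq_comp]
    calc B (T (T' (S' (S x)))) = B (T (S x)) := bkey hT (h1' (S x))
      _ = B x := h1 x
  · simp only [mul_apply_eq_comp]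
    calc B (S' (S (T (T' x)))) = B (S' (T' x)) := bkey hS' (h2 (T' x))
      _ = B x := h2' x

lemma binv_prod {s : List (H →L[ℂ] H)} (hb : ∀ f ∈ s, BBdd B f)
    (h : ∀ f ∈ s, BInv B f) : BInv B s.prod := by
  induction s with
  | nil => simpa using binv_one
  | cons a s ih =>
      rw [List.prod_cons]
      exact binv_mul (hb a List.mem_cons_self)
        (bbdd_prod fun f hf => hb f (List.mem_cons_of_mem a hf))
        (h a List.mem_cons_self)
        (ih (fun f hf => hb f (List.mem_cons_of_mem a hf))
          (fun f hf => h f (List.mem_cons_of_mem a hf)))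

lemma binv_extract {T T' : H →L[ℂ] H} (hT : BBdd B T) (hT' : BBdd B T')
    (hc : T * T' = T' * T) (h : BInv B (T * T')) : BInv B T := by
  obtain ⟨R, hR, h1, h2⟩ := h
  simp only [mul_apply_eq_comp] at h1 h2
  have hcpt : ∀ u, T (T' u) = T' (T u) := by
    intro u
    have := ContinuousLinearMap.ext_iff.mp hc u
    simpa [mul_apply_eq_comp] using this
  have hRT : ∀ x, B (R (T x)) = B (T (R x)) := by
    intro x
    have e1 : B (R (T (T (T' (R x))))) = B (R (T x)) := bkey hR (bkey hT (h1 x))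
    have e2 : T (T (T' (R x))) = T (T' (T (R x))) := congrArg T (hcpt (R x))
    rw [e2, h2 (T (R x))] at e1
    exact e1.symm
  refine ⟨T' * R, bbdd_mul hT' hR, fun x => ?_, fun x => ?_⟩
  · simp only [mul_apply_eq_comp]; exact h1 x
  · simp only [mul_apply_eq_comp]
    calc B (T' (R (T x))) = B (T' (T (R x))) := bkey hT' (hRT x)
      _ = B (T (T' (R x))) := (congrArg B (hcpt (R x))).symm
      _ = B x := h1 x

lemma ainv_iff_binv {A B : H →L[ℂ] H} (hn : ∀ x, sNorm A x = ‖B x‖)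
    (hk : ∀ u v : H, A u = A v ↔ B u = B v) (T : H →L[ℂ] H) :
    AInvertible A T ↔ BInv B T := by
  unfold AInvertible BInv
  refine exists_congr fun S => ?_
  have hb : ABounded A S ↔ BBdd B S := by unfold ABounded BBdd; simp only [hn]
  rw [hb]
  refine and_congr Iff.rfl (and_congr ?_ ?_) <;>
  · rw [ContinuousLinearMap.ext_iff]
    exact forall_congr' fun x => by simp only [comp_apply]; exact hk _ _

theorem stmt3 (A T : H →L[ℂ] H) (hA : A.IsPositive) (hA0 : A ≠ 0)
    (hT : ABounded A T) (p : Polynomial ℂ) (hp : 1 ≤ p.natDegree) :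
    ASpectrum A (Polynomial.aeval T p) = (fun z : ℂ => Polynomial.eval z p) '' ASpectrum A T := by
  have h0 : (0:H→L[ℂ]H) ≤ A := (ContinuousLinearMap.nonneg_iff_isPositive A).2 hA
  set B := CFC.sqrt A with hBdef
  have hB0 : (0:H→L[ℂ]H) ≤ B := CFC.sqrt_nonneg A
  have hBsa : IsSelfAdjoint B := IsSelfAdjoint.of_nonneg hB0
  have hsq : B * B = A := CFC.sqrt_mul_sqrt_self A h0
  have hn : ∀ x, sNorm A x = ‖B x‖ := by
    intro x
    have h1 : (inner ℂ (A x) x : ℂ) = (‖B x‖^2 : ℝ) := by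
      rw [← hsq, mul_apply_eq_comp]
      have hbb : B (B x) = adjoint B (B x) := by rw [hBsa.adjoint_eq]
      rw [hbb, ContinuousLinearMap.adjoint_inner_left, inner_self_eq_norm_sq_to_K]
      norm_cast
    unfold sNorm
    rw [h1, Complex.ofReal_re, Real.sqrt_sq (norm_nonneg _)]
  have hk : ∀ u v : H, A u = A v ↔ B u = B v := by
    have hk0 : ∀ u, A u = 0 ↔ B u = 0 := by
      intro u
      constructor
      · intro h
        have h2 := hn u
        unfold sNorm at h2
        rw [h, inner_zero_left] at h2
        simp only [Complex.zero_re, Real.sqrt_zero] at h2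
        exact norm_eq_zero.mp h2.symm
      · intro h
        rw [← hsq, mul_apply_eq_comp, h, map_zero]
    intro u v
    rw [← sub_eq_zero, ← sub_eq_zero (a := B u), ← map_sub, ← map_sub]
    exact hk0 _
  have hAinv := ainv_iff_binv hn hk
  have hTB : BBdd B T := by
    obtain ⟨c, hc, h⟩ := hT
    exact ⟨c, hc, fun x => by rw [← hn, ← hn]; exact h x⟩
  have hfac : ∀ r : ℂ, (Polynomial.aeval T) (Polynomial.X - Polynomial.C r)
      = T - r • (1:H→L[ℂ]H) := by
    intro r
    rw [map_sub, Polynomial.aeval_X, Polynomial.aeval_C, Algebra.algebraMap_eq_smul_one]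
  ext μ
  simp only [ASpectrum, Set.mem_setOf_eq, Set.mem_image]
  set q : Polynomial ℂ := p - Polynomial.C μ with hq
  have hqdeg : q.natDegree = p.natDegree := Polynomial.natDegree_sub_C
  have hq0 : q ≠ 0 := by
    intro h
    rw [h, Polynomial.natDegree_zero] at hqdeg
    omega
  have haq : (Polynomial.aeval T) p - μ • (1:H→L[ℂ]H) = Polynomial.aeval T q := by
    rw [hq, map_sub, Polynomial.aeval_C, Algebra.algebraMap_eq_smul_one]
  have main : BInv B (Polynomial.aeval T q) ↔
      ∀ r ∈ q.roots, BInv B (T - r • (1:H→L[ℂ]H)) := by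
    constructor
    · intro h r hr
      have hroot : q.IsRoot r := Polynomial.isRoot_of_mem_roots hr
      obtain ⟨u, hu⟩ := Polynomial.dvd_iff_isRoot.mpr hroot
      have heq : Polynomial.aeval T q = (T - r • 1) * Polynomial.aeval T u := by
        rw [hu, map_mul, hfac]
      have hcomm : (T - r • (1:H→L[ℂ]H)) * Polynomial.aeval T u
          = Polynomial.aeval T u * (T - r • 1) := by
        rw [← hfac r, ← map_mul, ← map_mul, mul_comm]
      exact binv_extract (by rw [← hfac r]; exact bbdd_aeval hTB _) (bbdd_aeval hTB u)
        hcomm (heq ▸ h)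
    · intro h
      have hsplit : q.Splits := IsAlgClosed.splits q
      have heq := hsplit.eq_prod_roots
      have hprod : Polynomial.aeval T q = (q.leadingCoeff • (1:H→L[ℂ]H)) *
          ((q.roots.toList.map (fun r => T - r • (1:H→L[ℂ]H))).prod) := by
        conv_lhs => rw [heq]
        rw [map_mul, Polynomial.aeval_C, Algebra.algebraMap_eq_smul_one]
        congr 1
        have h1 : (q.roots.map (fun a => Polynomial.X - Polynomial.C a)).prod
            = (q.roots.toList.map (fun a => Polynomial.X - Polynomial.C a)).prod := by
          conv_lhs => rw [← Multiset.coe_toList q.roots]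
          rw [Multiset.map_coe, Multiset.prod_coe]
        rw [h1, map_list_prod, List.map_map]
        exact congrArg List.prod (List.map_congr_left fun r _ => hfac r)
      rw [hprod]
      have hmem : ∀ f ∈ q.roots.toList.map (fun r => T - r • (1:H→L[ℂ]H)),
          BInv B f ∧ BBdd B f := by
        intro f hf
        obtain ⟨r, hr, rfl⟩ := List.mem_map.mp hf
        have hr' : r ∈ q.roots := (Multiset.mem_toList).mp hr
        refine ⟨h r hr', ?_⟩
        rw [← hfac r]; exact bbdd_aeval hTB _
      have hlc : q.leadingCoeff ≠ 0 := Polynomial.leadingCoeff_ne_zero.mpr hq0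
      exact binv_mul (bbdd_smul _ bbdd_one) (bbdd_prod fun f hf => (hmem f hf).2)
        (binv_smul_one hlc) (binv_prod (fun f hf => (hmem f hf).2) (fun f hf => (hmem f hf).1))
  rw [haq, hAinv, main]
  push_neg
  constructor
  · rintro ⟨r, hr, hnr⟩
    refine ⟨r, ?_, ?_⟩
    · rw [hAinv]; exact hnr
    · have hroot : q.IsRoot r := Polynomial.isRoot_of_mem_roots hr
      have : Polynomial.eval r q = Polynomial.eval r p - μ := by
        rw [hq, Polynomial.eval_sub, Polynomial.eval_C]
      rw [Polynomial.IsRoot] at hroot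
      rw [this] at hroot
      exact sub_eq_zero.mp hroot
  · rintro ⟨x, hx, hev⟩
    refine ⟨x, ?_, ?_⟩
    · rw [Polynomial.mem_roots hq0]
      rw [Polynomial.IsRoot, hq, Polynomial.eval_sub, Polynomial.eval_C, hev, sub_self]
    · rw [← hAinv]; exact hx
end
end

section
/- Let T be a bounded linear operator on H admitting an A-adjoint T^♯, and let T^♯♯ denote the A-adjoint of T^♯. Then T is A-normal if and only if T^♯ is A-normal, i.e., A T^♯ T = A T T^♯ if and only if A T^♯♯ T^♯ = A T^♯ T^♯♯. -/
open ContinuousLinearMap Filter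
open scoped ComplexOrder

noncomputable section

variable {H : Type*} [NormedAddCommGroup H] [InnerProductSpace ℂ H] [CompleteSpace H]

theorem stmt4 (A T Tsharp Tss : H →L[ℂ] H) (hA : A.IsPositive) (hA0 : A ≠ 0)
    (hadj : IsAAdjoint A T Tsharp) (hadj2 : IsAAdjoint A Tsharp Tss) :
    A ∘L Tsharp ∘L T = A ∘L T ∘L Tsharp ↔ A ∘L Tss ∘L Tsharp = A ∘L Tsharp ∘L Tss := by
  have hAsa : ContinuousLinearMap.adjoint A = A :=
    ContinuousLinearMap.isSelfAdjoint_iff'.mp hA.isSelfAdjoint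
  obtain ⟨h1, -⟩ := hadj
  obtain ⟨h2, -⟩ := hadj2
  have h1x : ∀ x, A (Tsharp x) = ContinuousLinearMap.adjoint T (A x) := fun x => by
    simpa using ContinuousLinearMap.ext_iff.mp h1 x
  have h2x : ∀ x, A (Tss x) = ContinuousLinearMap.adjoint Tsharp (A x) := fun x => by
    simpa using ContinuousLinearMap.ext_iff.mp h2 x
  constructor
  · intro h
    have h' := congrArg ContinuousLinearMap.adjoint h
    simp only [ContinuousLinearMap.adjoint_comp, hAsa] at h'
    have h'x : ∀ x, ContinuousLinearMap.adjoint T (ContinuousLinearMap.adjoint Tsharp (A x))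
        = ContinuousLinearMap.adjoint Tsharp (ContinuousLinearMap.adjoint T (A x)) := fun x => by
      simpa using ContinuousLinearMap.ext_iff.mp h' x
    ext x
    simp only [ContinuousLinearMap.comp_apply]
    rw [h2x, h1x, h1x, h2x]
    exact (h'x x).symm
  · intro h
    have hcomp : (ContinuousLinearMap.adjoint Tsharp ∘L ContinuousLinearMap.adjoint T) ∘L A
        = (ContinuousLinearMap.adjoint T ∘L ContinuousLinearMap.adjoint Tsharp) ∘L A := by
      ext x
      simp only [ContinuousLinearMap.comp_apply]
      have hx := ContinuousLinearMap.ext_iff.mp h x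
      simp only [ContinuousLinearMap.comp_apply] at hx
      simp only [← h1x, ← h2x]
      exact hx
    have h'' := congrArg ContinuousLinearMap.adjoint hcomp
    simp only [ContinuousLinearMap.adjoint_comp, ContinuousLinearMap.adjoint_adjoint, hAsa] at h''
    ext x
    have hx := ContinuousLinearMap.ext_iff.mp h'' x
    simp only [ContinuousLinearMap.comp_apply] at hx ⊢
    exact hx.symm
end
end

section
/- Let T be a bounded linear operator on H admitting an A-adjoint T^♯. Then T is A-normal if and only if ‖Tx‖_A = ‖T^♯x‖_A for all x ∈ H. -/
open ContinuousLinearMap Filter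
open scoped ComplexOrder

noncomputable section

variable {H : Type*} [NormedAddCommGroup H] [InnerProductSpace ℂ H] [CompleteSpace H]

theorem stmt5 (A T Tsharp : H →L[ℂ] H) (hA : A.IsPositive) (hA0 : A ≠ 0)
    (hadj : IsAAdjoint A T Tsharp) :
    A ∘L Tsharp ∘L T = A ∘L T ∘L Tsharp ↔ ∀ x : H, sNorm A (T x) = sNorm A (Tsharp x) := by
  have hsymm : (A : H →ₗ[ℂ] H).IsSymmetric :=
    (isSelfAdjoint_iff_isSymmetric).mp hA.isSelfAdjoint
  have hAcomp : ∀ y : H, A (Tsharp y) = ContinuousLinearMap.adjoint T (A y) := by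
    intro y
    have := congrFun (congrArg (fun f : H →L[ℂ] H => (f : H → H)) hadj.1) y
    simpa using this
  have key1 : ∀ x : H, (inner ℂ (A (Tsharp (T x))) x : ℂ) = inner ℂ (A (T x)) (T x) := by
    intro x
    rw [hAcomp, ContinuousLinearMap.adjoint_inner_left]
  have key2 : ∀ x : H, (inner ℂ (A (T (Tsharp x))) x : ℂ) = inner ℂ (A (Tsharp x)) (Tsharp x) := by
    intro x
    calc (inner ℂ (A (T (Tsharp x))) x : ℂ) = inner ℂ (T (Tsharp x)) (A x) := hsymm _ _
      _ = inner ℂ (Tsharp x) (ContinuousLinearMap.adjoint T (A x)) :=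
          (ContinuousLinearMap.adjoint_inner_right T _ _).symm
      _ = inner ℂ (Tsharp x) (A (Tsharp x)) := by rw [← hAcomp]
      _ = inner ℂ (A (Tsharp x)) (Tsharp x) := (hsymm _ _).symm
  have hreal : ∀ u : H, (inner ℂ (A u) u : ℂ) = ((inner ℂ (A u) u : ℂ)).re := by
    intro u
    have hc : (starRingEnd ℂ) (inner ℂ (A u) u : ℂ) = inner ℂ (A u) u := by
      rw [inner_conj_symm]; exact (hsymm u u).symm
    exact ((Complex.conj_eq_iff_re).mp hc).symm
  constructor
  · intro h x
    have hx : A (Tsharp (T x)) = A (T (Tsharp x)) := by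
      have := congrFun (congrArg (fun f : H →L[ℂ] H => (f : H → H)) h) x
      simpa using this
    unfold sNorm
    have : (inner ℂ (A (T x)) (T x) : ℂ) = inner ℂ (A (Tsharp x)) (Tsharp x) := by
      rw [← key1, ← key2, hx]
    rw [this]
  · intro h
    have hinner : ∀ x : H, (inner ℂ (A (Tsharp (T x))) x : ℂ) = inner ℂ (A (T (Tsharp x))) x := by
      intro x
      rw [key1, key2]
      have h1 := hreal (T x)
      have h2 := hreal (Tsharp x)
      rw [h1, h2]
      have hre : ((inner ℂ (A (T x)) (T x) : ℂ)).re = ((inner ℂ (A (Tsharp x)) (Tsharp x) : ℂ)).re := by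
        have hs := h x
        unfold sNorm at hs
        have n1 := hA.inner_nonneg_left (T x)
        have n2 := hA.inner_nonneg_left (Tsharp x)
        exact (Real.sqrt_inj (Complex.nonneg_iff.mp n1).1 (Complex.nonneg_iff.mp n2).1).mp hs
      rw [hre]
    apply ContinuousLinearMap.coe_injective
    rw [← ext_inner_map]
    intro x
    simpa using hinner x
end
end

section
/- Let T be a bounded linear operator on H admitting an A-adjoint T^♯. If T is A-normal, then the A-spectral radius of T equals its A-operator seminorm: lim_{n→∞} ‖T^n‖_A^{1/n} = ‖T‖_A. -/
open ContinuousLinearMap Filter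
open scoped ComplexOrder

noncomputable section

variable {H : Type*} [NormedAddCommGroup H] [InnerProductSpace ℂ H] [CompleteSpace H]

section MyAux

variable {A : H →L[ℂ] H}

lemma my_sNorm_nonneg (A : H →L[ℂ] H) (x : H) : 0 ≤ sNorm A x := Real.sqrt_nonneg _

lemma my_re_inner_nonneg (hA : A.IsPositive) (x : H) : 0 ≤ ((inner ℂ (A x) x : ℂ)).re := by
  exact (Complex.nonneg_iff.mp (hA.inner_nonneg_left x)).1

lemma my_sNorm_sq (hA : A.IsPositive) (x : H) :
    sNorm A x ^ 2 = ((inner ℂ (A x) x : ℂ)).re :=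
  Real.sq_sqrt (my_re_inner_nonneg hA x)

lemma my_hsym (hA : A.IsPositive) (u v : H) :
    (inner ℂ (A u) v : ℂ) = (inner ℂ u (A v) : ℂ) :=
  hA.isSelfAdjoint.isSymmetric u v

/-- semi-inner product core induced by `A`. -/
noncomputable def ACore (hA : A.IsPositive) : PreInnerProductSpace.Core ℂ H where
  inner x y := (inner ℂ (A x) y : ℂ)
  conj_inner_symm x y := by
    show (starRingEnd ℂ) (inner ℂ (A y) x : ℂ) = (inner ℂ (A x) y : ℂ)
    rw [inner_conj_symm]
    exact (my_hsym hA x y).symm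
  re_inner_nonneg x := (Complex.nonneg_iff.mp (hA.inner_nonneg_left x)).1
  add_left x y z := by
    show (inner ℂ (A (x + y)) z : ℂ) = (inner ℂ (A x) z : ℂ) + (inner ℂ (A y) z : ℂ)
    rw [map_add, inner_add_left]
  smul_left x y r := by
    show (inner ℂ (A (r • x)) y : ℂ) = (starRingEnd ℂ) r * (inner ℂ (A x) y : ℂ)
    rw [map_smul, inner_smul_left]

lemma my_cs (hA : A.IsPositive) (x y : H) :
    ‖(inner ℂ (A x) y : ℂ)‖ ≤ sNorm A x * sNorm A y := by
  have h : ‖(inner ℂ (A x) y : ℂ)‖ * ‖(inner ℂ (A y) x : ℂ)‖ ≤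
      RCLike.re (inner ℂ (A x) x : ℂ) * RCLike.re (inner ℂ (A y) y : ℂ) :=
    @InnerProductSpace.Core.inner_mul_inner_self_le ℂ H _ _ _ (ACore hA) x y
  have hsymn : ‖(inner ℂ (A y) x : ℂ)‖ = ‖(inner ℂ (A x) y : ℂ)‖ := by
    rw [my_hsym hA x y]
    exact norm_inner_symm _ _
  rw [hsymn] at h
  have h2 : ‖(inner ℂ (A x) y : ℂ)‖ ^ 2 ≤ (sNorm A x * sNorm A y) ^ 2 := by
    rw [mul_pow, my_sNorm_sq hA, my_sNorm_sq hA, sq]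
    simpa using h
  calc ‖(inner ℂ (A x) y : ℂ)‖ = Real.sqrt (‖(inner ℂ (A x) y : ℂ)‖ ^ 2) :=
        (Real.sqrt_sq (norm_nonneg _)).symm
    _ ≤ Real.sqrt ((sNorm A x * sNorm A y) ^ 2) := Real.sqrt_le_sqrt h2
    _ = sNorm A x * sNorm A y := Real.sqrt_sq (mul_nonneg (my_sNorm_nonneg A x) (my_sNorm_nonneg A y))

lemma my_sNorm_le_norm (hA : A.IsPositive) (x : H) :
    sNorm A x ≤ Real.sqrt ‖A‖ * ‖x‖ := by
  have h1 : ((inner ℂ (A x) x : ℂ)).re ≤ ‖A‖ * ‖x‖ ^ 2 := by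
    calc ((inner ℂ (A x) x : ℂ)).re ≤ ‖(inner ℂ (A x) x : ℂ)‖ := Complex.re_le_norm _
      _ ≤ ‖A x‖ * ‖x‖ := norm_inner_le_norm _ _
      _ ≤ (‖A‖ * ‖x‖) * ‖x‖ := by
          have := A.le_opNorm x
          nlinarith [norm_nonneg x]
      _ = ‖A‖ * ‖x‖ ^ 2 := by ring
  calc sNorm A x ≤ Real.sqrt (‖A‖ * ‖x‖ ^ 2) := Real.sqrt_le_sqrt h1
    _ = Real.sqrt ‖A‖ * ‖x‖ := by
        rw [Real.sqrt_mul (norm_nonneg A), Real.sqrt_sq (norm_nonneg x)]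

lemma my_sNorm_zero (A : H →L[ℂ] H) : sNorm A 0 = 0 := by
  simp [sNorm]

lemma my_Ax_eq_zero (hA : A.IsPositive) {x : H} (h : sNorm A x = 0) : A x = 0 := by
  have h1 : ‖(inner ℂ (A x) (A x) : ℂ)‖ ≤ 0 := by
    have := my_cs hA x (A x)
    rw [h] at this
    simpa using this
  have : (inner ℂ (A x) (A x) : ℂ) = 0 := by
    have := norm_nonneg (inner ℂ (A x) (A x) : ℂ)
    have hz : ‖(inner ℂ (A x) (A x) : ℂ)‖ = 0 := le_antisymm h1 this
    exact norm_eq_zero.mp hz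
  exact inner_self_eq_zero.mp this

lemma my_eq_zero_of_mem (hA : A.IsPositive) {x : H}
    (hx : x ∈ closure (Set.range (⇑A))) (hAx : A x = 0) : x = 0 := by
  have hsub : closure (Set.range (⇑A)) ⊆ {y : H | (inner ℂ x y : ℂ) = 0} := by
    apply closure_minimal
    · rintro y ⟨z, rfl⟩
      show (inner ℂ x (A z) : ℂ) = 0
      rw [← my_hsym hA, hAx, inner_zero_left]
    · have : Continuous fun y : H => (inner ℂ x y : ℂ) := continuous_const.inner continuous_id
      exact isClosed_eq this continuous_const
  have := hsub hx
  exact inner_self_eq_zero.mp this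

lemma my_sNorm_pos (hA : A.IsPositive) {x : H}
    (hx : x ∈ closure (Set.range (⇑A))) (hx0 : x ≠ 0) : 0 < sNorm A x := by
  rcases (my_sNorm_nonneg A x).lt_or_eq with h | h
  · exact h
  · exact absurd (my_eq_zero_of_mem hA hx (my_Ax_eq_zero hA h.symm)) hx0

lemma my_sNorm_add_ker (hA : A.IsPositive) {u w : H} (hw : A w = 0) :
    sNorm A (u + w) = sNorm A u := by
  unfold sNorm
  congr 1
  rw [map_add, hw, add_zero, inner_add_right, my_hsym hA u w, hw, inner_zero_right, add_zero]

end MyAux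

section MyOp

variable {A T Tsharp : H →L[ℂ] H}

lemma my_hAT (hA : A.IsPositive)
    (hadjop : A ∘L Tsharp = (ContinuousLinearMap.adjoint T) ∘L A) (z : H) :
    A (T z) = (ContinuousLinearMap.adjoint Tsharp) (A z) := by
  have h := congrArg ContinuousLinearMap.adjoint hadjop
  rw [ContinuousLinearMap.adjoint_comp, ContinuousLinearMap.adjoint_comp,
    ContinuousLinearMap.adjoint_adjoint, ← ContinuousLinearMap.star_eq_adjoint A,
    hA.isSelfAdjoint] at h
  have h2 := ContinuousLinearMap.ext_iff.mp h z
  simpa [ContinuousLinearMap.comp_apply] using h2.symm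

lemma my_hadj_pt (hadjop : A ∘L Tsharp = (ContinuousLinearMap.adjoint T) ∘L A) (z : H) :
    A (Tsharp z) = (ContinuousLinearMap.adjoint T) (A z) := by
  have h2 := ContinuousLinearMap.ext_iff.mp hadjop z
  simpa [ContinuousLinearMap.comp_apply] using h2

lemma my_I1 (hA : A.IsPositive)
    (hadjop : A ∘L Tsharp = (ContinuousLinearMap.adjoint T) ∘L A) (z : H) :
    (inner ℂ (A (T z)) (T z) : ℂ) = (inner ℂ (A z) (Tsharp (T z)) : ℂ) := by
  rw [my_hAT hA hadjop z]
  exact ContinuousLinearMap.adjoint_inner_left Tsharp (T z) (A z)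

lemma my_I2 (hA : A.IsPositive)
    (hadjop : A ∘L Tsharp = (ContinuousLinearMap.adjoint T) ∘L A)
    (hnormal : A ∘L Tsharp ∘L T = A ∘L T ∘L Tsharp) (y : H) :
    sNorm A (Tsharp y) = sNorm A (T y) := by
  have hnorm' : ∀ w : H, A (Tsharp (T w)) = A (T (Tsharp w)) := by
    intro w
    have := ContinuousLinearMap.ext_iff.mp hnormal w
    simpa [ContinuousLinearMap.comp_apply] using this
  have e1 : (inner ℂ (A (Tsharp y)) (Tsharp y) : ℂ) =
      (starRingEnd ℂ) (inner ℂ (A (T y)) (T y) : ℂ) := by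
    calc (inner ℂ (A (Tsharp y)) (Tsharp y) : ℂ)
        = (inner ℂ ((ContinuousLinearMap.adjoint T) (A y)) (Tsharp y) : ℂ) := by
          rw [my_hadj_pt hadjop]
      _ = (inner ℂ (A y) (T (Tsharp y)) : ℂ) :=
          ContinuousLinearMap.adjoint_inner_left T (Tsharp y) (A y)
      _ = (inner ℂ y (A (T (Tsharp y))) : ℂ) := my_hsym hA y _
      _ = (inner ℂ y (A (Tsharp (T y))) : ℂ) := by rw [hnorm']
      _ = (inner ℂ y ((ContinuousLinearMap.adjoint T) (A (T y))) : ℂ) := by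
          rw [my_hadj_pt hadjop]
      _ = (starRingEnd ℂ) (inner ℂ ((ContinuousLinearMap.adjoint T) (A (T y))) y : ℂ) :=
          (inner_conj_symm _ _).symm
      _ = (starRingEnd ℂ) (inner ℂ (A (T y)) (T y) : ℂ) := by
          rw [ContinuousLinearMap.adjoint_inner_left]
  unfold sNorm
  rw [e1, Complex.conj_re]

lemma my_I3 (hA : A.IsPositive)
    (hadjop : A ∘L Tsharp = (ContinuousLinearMap.adjoint T) ∘L A)
    (hnormal : A ∘L Tsharp ∘L T = A ∘L T ∘L Tsharp) (y : H) :
    sNorm A (T y) ^ 2 ≤ sNorm A y * sNorm A (T (T y)) := by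
  calc sNorm A (T y) ^ 2 = ((inner ℂ (A (T y)) (T y) : ℂ)).re := my_sNorm_sq hA _
    _ = ((inner ℂ (A y) (Tsharp (T y)) : ℂ)).re := by rw [my_I1 hA hadjop]
    _ ≤ ‖(inner ℂ (A y) (Tsharp (T y)) : ℂ)‖ := Complex.re_le_norm _
    _ ≤ sNorm A y * sNorm A (Tsharp (T y)) := my_cs hA _ _
    _ = sNorm A y * sNorm A (T (T y)) := by rw [my_I2 hA hadjop hnormal]

lemma my_L1 (hA : A.IsPositive) {R : H →L[ℂ] H}
    (hR : ∀ z, A (R z) = (ContinuousLinearMap.adjoint R) (A z)) (z : H) :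
    sNorm A (R z) ≤ ‖R‖ * sNorm A z := by
  have hRm : ∀ (m : ℕ) (w : H),
      A ((R ^ m) w) = ((ContinuousLinearMap.adjoint R) ^ m) (A w) := by
    intro m
    induction m with
    | zero => intro w; simp
    | succ k ih =>
      intro w
      rw [pow_succ', pow_succ', ContinuousLinearMap.mul_apply,
        ContinuousLinearMap.mul_apply, hR, ih]
  have hm : ∀ (m : ℕ) (w : H),
      sNorm A ((R ^ m) w) ^ 2 ≤ sNorm A w * sNorm A ((R ^ (2 * m)) w) := by
    intro m w
    have hadjpow : (ContinuousLinearMap.adjoint R) ^ m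
        = ContinuousLinearMap.adjoint (R ^ m) := by
      rw [← ContinuousLinearMap.star_eq_adjoint, ← ContinuousLinearMap.star_eq_adjoint,
        star_pow]
    have e1 : (inner ℂ (A ((R ^ m) w)) ((R ^ m) w) : ℂ)
        = (inner ℂ (A w) ((R ^ (2 * m)) w) : ℂ) := by
      rw [hRm m w, hadjpow, ContinuousLinearMap.adjoint_inner_left]
      congr 1
      rw [two_mul, pow_add, ContinuousLinearMap.mul_apply]
    calc sNorm A ((R ^ m) w) ^ 2 = ((inner ℂ (A ((R ^ m) w)) ((R ^ m) w) : ℂ)).re :=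
          my_sNorm_sq hA _
      _ = ((inner ℂ (A w) ((R ^ (2 * m)) w) : ℂ)).re := by rw [e1]
      _ ≤ ‖(inner ℂ (A w) ((R ^ (2 * m)) w) : ℂ)‖ := Complex.re_le_norm _
      _ ≤ sNorm A w * sNorm A ((R ^ (2 * m)) w) := my_cs hA _ _
  have hk : ∀ k : ℕ, sNorm A (R z) ^ (2 ^ k)
      ≤ sNorm A z ^ (2 ^ k - 1) * sNorm A ((R ^ (2 ^ k)) z) := by
    intro k
    induction k with
    | zero => simpa using le_refl _
    | succ k ih =>
      have hm1 : 1 ≤ 2 ^ k := Nat.one_le_two_pow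
      have e2 : 2 ^ (k + 1) = 2 ^ k * 2 := by rw [pow_succ]
      have e3 : 2 * 2 ^ k = 2 ^ (k + 1) := by rw [pow_succ]; ring
      calc sNorm A (R z) ^ 2 ^ (k + 1) = (sNorm A (R z) ^ 2 ^ k) ^ 2 := by
            rw [e2, pow_mul]
        _ ≤ (sNorm A z ^ (2 ^ k - 1) * sNorm A ((R ^ 2 ^ k) z)) ^ 2 :=
            pow_le_pow_left₀ (pow_nonneg (my_sNorm_nonneg A _) _) ih 2
        _ = sNorm A z ^ (2 ^ k - 1) * sNorm A z ^ (2 ^ k - 1)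
              * sNorm A ((R ^ 2 ^ k) z) ^ 2 := by ring
        _ ≤ sNorm A z ^ (2 ^ k - 1) * sNorm A z ^ (2 ^ k - 1)
              * (sNorm A z * sNorm A ((R ^ (2 * 2 ^ k)) z)) := by
            refine mul_le_mul_of_nonneg_left (hm (2 ^ k) z) ?_
            exact mul_nonneg (pow_nonneg (my_sNorm_nonneg A z) _)
              (pow_nonneg (my_sNorm_nonneg A z) _)
        _ = sNorm A z ^ ((2 ^ k - 1) + (2 ^ k - 1) + 1)
              * sNorm A ((R ^ (2 * 2 ^ k)) z) := by
            rw [pow_add, pow_add, pow_one]; ring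
        _ = sNorm A z ^ (2 ^ (k + 1) - 1) * sNorm A ((R ^ 2 ^ (k + 1)) z) := by
            rw [e3]
            congr 2
            omega
  by_cases h0 : sNorm A z = 0
  · have h1 := hm 1 z
    rw [h0, zero_mul, pow_one] at h1
    have h2 : sNorm A (R z) = 0 := by
      nlinarith [my_sNorm_nonneg A (R z)]
    rw [h2, h0, mul_zero]
  · have hz : 0 < sNorm A z := (my_sNorm_nonneg A z).lt_of_ne (Ne.symm h0)
    by_contra hcon
    push_neg at hcon
    have hRpos : 0 < ‖R‖ := by
      rcases (norm_nonneg R).lt_or_eq with h | h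
      · exact h
      · exfalso
        have hR0 : R = 0 := by rwa [eq_comm, norm_eq_zero] at h
        rw [hR0] at hcon
        have : sNorm A ((0 : H →L[ℂ] H) z) = 0 := by
          rw [ContinuousLinearMap.zero_apply, my_sNorm_zero]
        rw [this, norm_zero, zero_mul] at hcon
        exact lt_irrefl 0 hcon
    have hbpos : 0 < ‖R‖ * sNorm A z := mul_pos hRpos hz
    have hq : 1 < sNorm A (R z) / (‖R‖ * sNorm A z) := (one_lt_div hbpos).mpr hcon
    set q := sNorm A (R z) / (‖R‖ * sNorm A z) with hqdef
    set C := Real.sqrt ‖A‖ * ‖z‖ / sNorm A z with hCdef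
    have key : ∀ k : ℕ, q ^ k ≤ C := by
      intro k
      have hk2 : q ^ k ≤ q ^ (2 ^ k) :=
        pow_le_pow_right₀ hq.le (Nat.le_of_lt (Nat.lt_two_pow_self (n := k)))
      refine hk2.trans ?_
      have hm0 : 0 < 2 ^ k := Nat.two_pow_pos k
      have h1 := hk k
      have h2 : sNorm A ((R ^ 2 ^ k) z) ≤ Real.sqrt ‖A‖ * (‖R‖ ^ 2 ^ k * ‖z‖) := by
        calc sNorm A ((R ^ 2 ^ k) z) ≤ Real.sqrt ‖A‖ * ‖(R ^ 2 ^ k) z‖ :=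
              my_sNorm_le_norm hA _
          _ ≤ Real.sqrt ‖A‖ * (‖R ^ 2 ^ k‖ * ‖z‖) :=
              mul_le_mul_of_nonneg_left ((R ^ 2 ^ k).le_opNorm z) (Real.sqrt_nonneg _)
          _ ≤ Real.sqrt ‖A‖ * (‖R‖ ^ 2 ^ k * ‖z‖) := by
              refine mul_le_mul_of_nonneg_left ?_ (Real.sqrt_nonneg _)
              exact mul_le_mul_of_nonneg_right (norm_pow_le' R hm0) (norm_nonneg z)
      have hNz : sNorm A z ^ (2 ^ k - 1) * sNorm A z = sNorm A z ^ 2 ^ k := by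
        rw [← pow_succ]
        congr 1
        omega
      rw [hqdef, hCdef, div_pow, div_le_div_iff₀ (pow_pos hbpos _) hz]
      calc sNorm A (R z) ^ 2 ^ k * sNorm A z
          ≤ (sNorm A z ^ (2 ^ k - 1) * sNorm A ((R ^ 2 ^ k) z)) * sNorm A z :=
            mul_le_mul_of_nonneg_right h1 hz.le
        _ ≤ (sNorm A z ^ (2 ^ k - 1) * (Real.sqrt ‖A‖ * (‖R‖ ^ 2 ^ k * ‖z‖)))
              * sNorm A z := by
            refine mul_le_mul_of_nonneg_right ?_ hz.le
            exact mul_le_mul_of_nonneg_left h2 (pow_nonneg hz.le _)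
        _ = Real.sqrt ‖A‖ * ‖z‖ * (‖R‖ ^ 2 ^ k * (sNorm A z ^ (2 ^ k - 1) * sNorm A z)) := by
            ring
        _ = Real.sqrt ‖A‖ * ‖z‖ * (‖R‖ ^ 2 ^ k * sNorm A z ^ 2 ^ k) := by rw [hNz]
        _ = Real.sqrt ‖A‖ * ‖z‖ * (‖R‖ * sNorm A z) ^ 2 ^ k := by rw [mul_pow]
    obtain ⟨k, hk'⟩ := ((tendsto_pow_atTop_atTop_of_one_lt hq).eventually_ge_atTop (C + 1)).exists
    linarith [key k]

lemma my_L2 (hA : A.IsPositive)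
    (hadjop : A ∘L Tsharp = (ContinuousLinearMap.adjoint T) ∘L A) (z : H) :
    sNorm A (T z) ≤ Real.sqrt ‖Tsharp ∘L T‖ * sNorm A z := by
  set R := Tsharp ∘L T with hRdef
  have hR : ∀ w, A (R w) = (ContinuousLinearMap.adjoint R) (A w) := by
    intro w
    rw [hRdef, ContinuousLinearMap.adjoint_comp]
    show A (Tsharp (T w)) = (ContinuousLinearMap.adjoint T)
      ((ContinuousLinearMap.adjoint Tsharp) (A w))
    rw [my_hadj_pt hadjop (T w), my_hAT hA hadjop w]
  have hL1 := my_L1 hA hR z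
  have hsq : sNorm A (T z) ^ 2 ≤ ‖R‖ * sNorm A z ^ 2 := by
    calc sNorm A (T z) ^ 2 = ((inner ℂ (A (T z)) (T z) : ℂ)).re := my_sNorm_sq hA _
      _ = ((inner ℂ (A z) (R z) : ℂ)).re := by rw [my_I1 hA hadjop]; rfl
      _ ≤ ‖(inner ℂ (A z) (R z) : ℂ)‖ := Complex.re_le_norm _
      _ ≤ sNorm A z * sNorm A (R z) := my_cs hA _ _
      _ ≤ sNorm A z * (‖R‖ * sNorm A z) :=
          mul_le_mul_of_nonneg_left hL1 (my_sNorm_nonneg A z)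
      _ = ‖R‖ * sNorm A z ^ 2 := by ring
  calc sNorm A (T z) = Real.sqrt (sNorm A (T z) ^ 2) :=
        (Real.sqrt_sq (my_sNorm_nonneg A _)).symm
    _ ≤ Real.sqrt (‖R‖ * sNorm A z ^ 2) := Real.sqrt_le_sqrt hsq
    _ = Real.sqrt ‖R‖ * sNorm A z := by
        rw [Real.sqrt_mul (norm_nonneg R), Real.sqrt_sq (my_sNorm_nonneg A z)]

end MyOp

set_option maxHeartbeats 1000000 in
theorem stmt7 (A T Tsharp : H →L[ℂ] H) (hA : A.IsPositive) (hA0 : A ≠ 0)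
    (hadj : IsAAdjoint A T Tsharp)
    (hnormal : A ∘L Tsharp ∘L T = A ∘L T ∘L Tsharp) :
    Filter.Tendsto (fun n : ℕ => (AOpNorm A (T ^ n)) ^ ((1 : ℝ) / (n : ℝ)))
      Filter.atTop (nhds (AOpNorm A T)) := by
  classical
  have hadjop := hadj.1
  have hsym := my_hsym hA
  set c : ℝ := Real.sqrt ‖Tsharp ∘L T‖ with hc
  have hc0 : 0 ≤ c := Real.sqrt_nonneg _
  have cb : ∀ z, sNorm A (T z) ≤ c * sNorm A z := my_L2 hA hadjop
  have cbn : ∀ (n : ℕ) (z : H), sNorm A ((T ^ n) z) ≤ c ^ n * sNorm A z := by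
    intro n
    induction n with
    | zero => intro z; simpa using le_refl (sNorm A z)
    | succ n ih =>
      intro z
      rw [pow_succ, ContinuousLinearMap.mul_apply]
      calc sNorm A ((T ^ n) (T z)) ≤ c ^ n * sNorm A (T z) := ih (T z)
        _ ≤ c ^ n * (c * sNorm A z) :=
            mul_le_mul_of_nonneg_left (cb z) (pow_nonneg hc0 n)
        _ = c ^ (n + 1) * sNorm A z := by rw [pow_succ]; ring
  set CR := closure (Set.range (⇑A)) with hCR
  set Sn : ℕ → Set ℝ := fun n =>
    {r : ℝ | ∃ x : H, x ∈ CR ∧ x ≠ 0 ∧ r = sNorm A ((T ^ n) x) / sNorm A x} with hSndef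
  have hAop : ∀ n, AOpNorm A (T ^ n) = sSup (Sn n) := fun n => rfl
  obtain ⟨y0, hy0⟩ : ∃ y, A y ≠ 0 := by
    by_contra h
    push_neg at h
    exact hA0 (ContinuousLinearMap.ext fun y => by
      rw [h y, ContinuousLinearMap.zero_apply])
  have hx0mem : A y0 ∈ CR := subset_closure ⟨y0, rfl⟩
  have hSne : ∀ n, (Sn n).Nonempty := fun n => ⟨_, A y0, hx0mem, hy0, rfl⟩
  have hbdd : ∀ n, BddAbove (Sn n) := by
    intro n
    refine ⟨c ^ n, ?_⟩
    rintro r ⟨x, hx, hx0, rfl⟩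
    exact (div_le_iff₀ (my_sNorm_pos hA hx hx0)).mpr (cbn n x)
  have hM0 : ∀ n, 0 ≤ sSup (Sn n) := by
    intro n
    obtain ⟨r, hr⟩ := hSne n
    refine le_trans ?_ (le_csSup (hbdd n) hr)
    obtain ⟨x, hx, hx0, rfl⟩ := hr
    exact div_nonneg (my_sNorm_nonneg A _) (my_sNorm_nonneg A _)
  set M := sSup (Sn 1) with hMdef
  have hM0' : 0 ≤ M := hM0 1
  -- projection machinery
  set K : Submodule ℂ H := (LinearMap.range (A : H →ₗ[ℂ] H)).topologicalClosure with hK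
  have hKset : (K : Set H) = CR := by
    rw [hK, Submodule.topologicalClosure_coe, hCR]
    congr 1
  haveI : CompleteSpace K := (Submodule.isClosed_topologicalClosure _).completeSpace_coe
  have horth : ∀ w ∈ Kᗮ, A w = 0 := by
    intro w hw
    have h1 : ∀ u : H, (inner ℂ (A w) u : ℂ) = 0 := by
      intro u
      have hAu : A u ∈ K := Submodule.le_topologicalClosure _ (LinearMap.mem_range_self (A : H →ₗ[ℂ] H) u)
      have h2 : (inner ℂ (A u) w : ℂ) = 0 := (Submodule.mem_orthogonal K w).mp hw (A u) hAu
      calc (inner ℂ (A w) u : ℂ) = (inner ℂ w (A u) : ℂ) := hsym w u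
        _ = (starRingEnd ℂ) (inner ℂ (A u) w : ℂ) := (inner_conj_symm _ _).symm
        _ = 0 := by rw [h2]; exact map_zero _
    exact inner_self_eq_zero.mp (h1 (A w))
  have gb : ∀ y : H, sNorm A (T y) ≤ M * sNorm A y := by
    intro y
    set u : H := (K.orthogonalProjection y : H) with hu
    have hwmem : y - u ∈ Kᗮ := K.sub_starProjection_mem_orthogonal y
    have hAw : A (y - u) = 0 := horth _ hwmem
    have hdecomp : u + (y - u) = y := by abel
    have hNy : sNorm A y = sNorm A u := by
      have h := my_sNorm_add_ker hA (u := u) hAw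
      rw [hdecomp] at h
      exact h
    have hATw : A (T (y - u)) = 0 := by
      rw [my_hAT hA hadjop (y - u), hAw, map_zero]
    have hNTy : sNorm A (T y) = sNorm A (T u) := by
      have h := my_sNorm_add_ker hA (u := T u) hATw
      rw [← map_add, hdecomp] at h
      exact h
    rw [hNy, hNTy]
    by_cases hu0 : u = 0
    · rw [hu0, map_zero, my_sNorm_zero, mul_zero]
    · have humem : u ∈ CR := by rw [← hKset]; exact SetLike.coe_mem _
      have hpos := my_sNorm_pos hA humem hu0
      have hmem : sNorm A (T u) / sNorm A u ∈ Sn 1 :=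
        ⟨u, humem, hu0, by rw [pow_one]⟩
      have h := le_csSup (hbdd 1) hmem
      exact (div_le_iff₀ hpos).mp h
  have gbn : ∀ (n : ℕ) (y : H), sNorm A ((T ^ n) y) ≤ M ^ n * sNorm A y := by
    intro n
    induction n with
    | zero => intro y; simpa using le_refl (sNorm A y)
    | succ n ih =>
      intro y
      rw [pow_succ, ContinuousLinearMap.mul_apply]
      calc sNorm A ((T ^ n) (T y)) ≤ M ^ n * sNorm A (T y) := ih (T y)
        _ ≤ M ^ n * (M * sNorm A y) :=
            mul_le_mul_of_nonneg_left (gb y) (pow_nonneg hM0' n)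
        _ = M ^ (n + 1) * sNorm A y := by rw [pow_succ]; ring
  have upper : ∀ n, sSup (Sn n) ≤ M ^ n := by
    intro n
    apply csSup_le (hSne n)
    rintro r ⟨x, hx, hx0, rfl⟩
    exact (div_le_iff₀ (my_sNorm_pos hA hx hx0)).mpr (gbn n x)
  have I3 := my_I3 hA hadjop hnormal
  have chain : ∀ (x : H) (k : ℕ),
      sNorm A (T x) * sNorm A ((T ^ k) x) ≤ sNorm A x * sNorm A ((T ^ (k + 1)) x) := by
    intro x k
    induction k with
    | zero =>
      simp only [pow_zero, pow_one, ContinuousLinearMap.one_apply]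
      exact le_of_eq (mul_comm _ _)
    | succ k ih =>
      by_cases h : sNorm A ((T ^ (k + 1)) x) = 0
      · rw [h, mul_zero]
        exact mul_nonneg (my_sNorm_nonneg A x) (my_sNorm_nonneg A _)
      · have hpos : 0 < sNorm A ((T ^ (k + 1)) x) :=
          (my_sNorm_nonneg A _).lt_of_ne (Ne.symm h)
        have e1 : T ((T ^ k) x) = (T ^ (k + 1)) x := by
          rw [pow_succ', ContinuousLinearMap.mul_apply]
        have e2 : T ((T ^ (k + 1)) x) = (T ^ (k + 2)) x := by
          rw [show (T : H →L[ℂ] H) ^ (k + 2) = T * T ^ (k + 1) from pow_succ' T (k + 1),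
            ContinuousLinearMap.mul_apply]
        have hlc : sNorm A ((T ^ (k + 1)) x) ^ 2
            ≤ sNorm A ((T ^ k) x) * sNorm A ((T ^ (k + 2)) x) := by
          have h3 := I3 ((T ^ k) x)
          rw [e1] at h3
          rw [e2] at h3
          exact h3
        apply le_of_mul_le_mul_right _ hpos
        nlinarith [ih, hlc, my_sNorm_nonneg A (T x), my_sNorm_nonneg A x,
          my_sNorm_nonneg A ((T ^ k) x), my_sNorm_nonneg A ((T ^ (k + 1)) x),
          my_sNorm_nonneg A ((T ^ (k + 2)) x)]
  have powb : ∀ (x : H) (n : ℕ),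
      sNorm A (T x) ^ n * sNorm A x ≤ sNorm A x ^ n * sNorm A ((T ^ n) x) := by
    intro x n
    induction n with
    | zero => simpa using le_refl (sNorm A x)
    | succ n ih =>
      calc sNorm A (T x) ^ (n + 1) * sNorm A x
          = sNorm A (T x) * (sNorm A (T x) ^ n * sNorm A x) := by ring
        _ ≤ sNorm A (T x) * (sNorm A x ^ n * sNorm A ((T ^ n) x)) :=
            mul_le_mul_of_nonneg_left ih (my_sNorm_nonneg A _)
        _ = sNorm A x ^ n * (sNorm A (T x) * sNorm A ((T ^ n) x)) := by ring
        _ ≤ sNorm A x ^ n * (sNorm A x * sNorm A ((T ^ (n + 1)) x)) :=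
            mul_le_mul_of_nonneg_left (chain x n) (pow_nonneg (my_sNorm_nonneg A x) n)
        _ = sNorm A x ^ (n + 1) * sNorm A ((T ^ (n + 1)) x) := by ring
  have lower : ∀ n : ℕ, n ≠ 0 → M ^ n ≤ sSup (Sn n) := by
    intro n hn
    have hroot : M ≤ sSup (Sn n) ^ ((n : ℝ)⁻¹) := by
      apply csSup_le (hSne 1)
      rintro r ⟨x, hx, hx0, rfl⟩
      have hpos := my_sNorm_pos hA hx hx0
      have hr0 : 0 ≤ sNorm A ((T ^ 1) x) / sNorm A x :=
        div_nonneg (my_sNorm_nonneg A _) hpos.le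
      have hrn : (sNorm A ((T ^ 1) x) / sNorm A x) ^ n ≤ sSup (Sn n) := by
        have hmem : sNorm A ((T ^ n) x) / sNorm A x ∈ Sn n := ⟨x, hx, hx0, rfl⟩
        refine le_trans ?_ (le_csSup (hbdd n) hmem)
        rw [div_pow, div_le_div_iff₀ (pow_pos hpos n) hpos, pow_one]
        calc sNorm A (T x) ^ n * sNorm A x
            ≤ sNorm A x ^ n * sNorm A ((T ^ n) x) := powb x n
          _ = sNorm A ((T ^ n) x) * sNorm A x ^ n := mul_comm _ _
      calc sNorm A ((T ^ 1) x) / sNorm A x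
          = ((sNorm A ((T ^ 1) x) / sNorm A x) ^ n) ^ ((n : ℝ)⁻¹) :=
            (Real.pow_rpow_inv_natCast hr0 hn).symm
        _ ≤ (sSup (Sn n)) ^ ((n : ℝ)⁻¹) :=
            Real.rpow_le_rpow (pow_nonneg hr0 n) hrn (by positivity)
    calc M ^ n ≤ (sSup (Sn n) ^ ((n : ℝ)⁻¹)) ^ n := pow_le_pow_left₀ hM0' hroot n
      _ = sSup (Sn n) := Real.rpow_inv_natCast_pow (hM0 n) hn
  have hmain : ∀ n : ℕ, n ≠ 0 → AOpNorm A (T ^ n) = M ^ n := by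
    intro n hn
    rw [hAop n]
    exact le_antisymm (upper n) (lower n hn)
  have hT1 : AOpNorm A T = M := by
    have h : AOpNorm A T = AOpNorm A (T ^ 1) := by rw [pow_one]
    rw [h, hAop 1]
  have hev : ∀ᶠ n : ℕ in atTop,
      (fun _ : ℕ => M) n = (AOpNorm A (T ^ n)) ^ ((1 : ℝ) / (n : ℝ)) := by
    filter_upwards [eventually_ge_atTop 1] with n hn
    have hn0 : n ≠ 0 := by omega
    have hn' : (n : ℝ) ≠ 0 := Nat.cast_ne_zero.mpr hn0
    rw [hmain n hn0, ← Real.rpow_natCast M n, ← Real.rpow_mul hM0',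
      mul_one_div, div_self hn', Real.rpow_one]
  rw [hT1]
  exact Tendsto.congr' hev tendsto_const_nhds

end
end

section
/- Let T and S be bounded linear operators on H, each admitting an A-adjoint (denoted T^♯ and S^♯), such that S is an A-inverse of T, i.e., ATS = AST = A. If T is A-normal, then S is A-normal, i.e., A S^♯ S = A S S^♯. -/
open ContinuousLinearMap Filter
open scoped ComplexOrder

noncomputable section

variable {H : Type*} [NormedAddCommGroup H] [InnerProductSpace ℂ H] [CompleteSpace H]

private lemma stmt10_aux {R : Type*} [Monoid R] [StarMul R] (a t s t' s' : R)
    (ha : star a = a)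
    (h1 : a * t' = star t * a) (h2 : a * s' = star s * a)
    (h3 : a * (t * s) = a) (h4 : a * (s * t) = a)
    (h5 : a * (t' * t) = a * (t * t')) :
    a * (s' * s) = a * (s * s') := by
  have d1 : star s' * a = a * s := by
    have h := congrArg star h2
    rw [star_mul, star_mul, star_star, ha] at h
    exact h
  have d2 : star t' * a = a * t := by
    have h := congrArg star h1
    rw [star_mul, star_mul, star_star, ha] at h
    exact h
  have r1 : ∀ x : R, a * (t' * x) = star t * (a * x) := fun x => by
    have h : (a * t') * x = (star t * a) * x := by rw [h1]
    simpa only [mul_assoc] using h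
  have r2 : ∀ x : R, a * (s' * x) = star s * (a * x) := fun x => by
    have h : (a * s') * x = (star s * a) * x := by rw [h2]
    simpa only [mul_assoc] using h
  have r3 : ∀ x : R, a * (s * x) = star s' * (a * x) := fun x => by
    have h : (a * s) * x = (star s' * a) * x := by rw [d1]
    simpa only [mul_assoc] using h
  have abs3 : ∀ x : R, a * (t * (s * x)) = a * x := fun x => by
    have h : (a * (t * s)) * x = a * x := by rw [h3]
    simpa only [mul_assoc] using h
  have abs4 : ∀ x : R, a * (s * (t * x)) = a * x := fun x => by
    have h : (a * (s * t)) * x = a * x := by rw [h4]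
    simpa only [mul_assoc] using h
  have n : ∀ x : R, a * (t' * (t * x)) = a * (t * (t' * x)) := fun x => by
    have h : (a * (t' * t)) * x = (a * (t * t')) * x := by rw [h5]
    simpa only [mul_assoc] using h
  have C1 : a * (t' * s) = a * (s * t') := by
    calc a * (t' * s) = a * (s * (t * (t' * s))) := (abs4 _).symm
      _ = star s' * (a * (t * (t' * s))) := r3 _
      _ = star s' * (a * (t' * (t * s))) := by rw [n]
      _ = star s' * (star t * (a * (t * s))) := by rw [r1]
      _ = star s' * (star t * a) := by rw [h3]
      _ = star s' * (a * t') := by rw [← h1]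
      _ = a * (s * t') := (r3 _).symm
  have hstar := congrArg star C1
  simp only [star_mul, ha] at hstar
  -- hstar : star s * star t' * a = star t' * star s * a
  have C2 : a * (s' * t) = a * (t * s') := by
    calc a * (s' * t) = (a * s') * t := (mul_assoc _ _ _).symm
      _ = (star s * a) * t := by rw [h2]
      _ = star s * (a * t) := mul_assoc _ _ _
      _ = star s * (star t' * a) := by rw [← d2]
      _ = star s * star t' * a := (mul_assoc _ _ _).symm
      _ = star t' * star s * a := hstar
      _ = star t' * (star s * a) := mul_assoc _ _ _
      _ = star t' * (a * s') := by rw [← h2]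
      _ = (star t' * a) * s' := (mul_assoc _ _ _).symm
      _ = (a * t) * s' := by rw [d2]
      _ = a * (t * s') := mul_assoc _ _ _
  have L : a * (s * (s' * t)) = a * s' := by
    calc a * (s * (s' * t)) = star s' * (a * (s' * t)) := r3 _
      _ = star s' * (a * (t * s')) := by rw [C2]
      _ = (star s' * a) * (t * s') := (mul_assoc _ _ _).symm
      _ = (a * s) * (t * s') := by rw [d1]
      _ = a * (s * (t * s')) := mul_assoc _ _ _
      _ = a * s' := abs4 _
  calc a * (s' * s) = (a * s') * s := (mul_assoc _ _ _).symm
    _ = (a * (s * (s' * t))) * s := by rw [L]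
    _ = a * (s * (s' * (t * s))) := by simp only [mul_assoc]
    _ = star s' * (a * (s' * (t * s))) := r3 _
    _ = star s' * (star s * (a * (t * s))) := by rw [r2]
    _ = star s' * (star s * a) := by rw [h3]
    _ = star s' * (a * s') := by rw [← h2]
    _ = (star s' * a) * s' := (mul_assoc _ _ _).symm
    _ = (a * s) * s' := by rw [d1]
    _ = a * (s * s') := mul_assoc _ _ _

theorem stmt10 (A T S Tsharp Ssharp : H →L[ℂ] H) (hA : A.IsPositive) (hA0 : A ≠ 0)
    (hadjT : IsAAdjoint A T Tsharp) (hadjS : IsAAdjoint A S Ssharp)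
    (hinv1 : A ∘L T ∘L S = A) (hinv2 : A ∘L S ∘L T = A)
    (hnormal : A ∘L Tsharp ∘L T = A ∘L T ∘L Tsharp) :
    A ∘L Ssharp ∘L S = A ∘L S ∘L Ssharp := by
  have key := stmt10_aux A T S Tsharp Ssharp hA.isSelfAdjoint
    hadjT.1 hadjS.1 hinv1 hinv2 hnormal
  exact key
end
end

section
/- Let T_1, T_2, …, T_n be A-bounded operators on H that pairwise commute (T_i T_j = T_j T_i for all i, j). Then the product T_1 T_2 ⋯ T_n is A-invertible if and only if each T_i is A-invertible. -/
open ContinuousLinearMap Filter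
open scoped ComplexOrder

set_option synthInstance.maxHeartbeats 800000
set_option maxHeartbeats 1600000
set_option linter.unusedSectionVars false
noncomputable section

variable {H : Type*} [NormedAddCommGroup H] [InnerProductSpace ℂ H] [CompleteSpace H]

lemma aker {A : H →L[ℂ] H} (hA : A.IsPositive) {z : H} (hz : sNorm A z = 0) : A z = 0 := by
  have hA' : 0 ≤ A := (ContinuousLinearMap.nonneg_iff_isPositive A).mpr hA
  set B := CFC.sqrt A with hB
  have hBB : B * B = A := CFC.sqrt_mul_sqrt_self A hA'
  have hBpos : 0 ≤ B := CFC.sqrt_nonneg A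
  have hBsa : IsSelfAdjoint B := IsSelfAdjoint.of_nonneg hBpos
  have hinner : (inner ℂ (A z) z : ℂ) = (‖B z‖ : ℂ)^2 := by
    rw [← hBB]
    have : (B * B) z = B (B z) := rfl
    rw [this]
    calc (inner ℂ (B (B z)) z : ℂ) = inner ℂ (B z) (B z) := hBsa.isSymmetric (B z) z
    _ = (‖B z‖ : ℂ)^2 := by rw [inner_self_eq_norm_sq_to_K]; norm_cast
  have h0 : ‖B z‖ = 0 := by
    have : sNorm A z = ‖B z‖ := by
      rw [sNorm, hinner]
      have : (((‖B z‖ : ℂ))^2).re = ‖B z‖^2 := by norm_cast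
      rw [this, Real.sqrt_sq (norm_nonneg _)]
    rwa [this] at hz
  have hBz : B z = 0 := norm_eq_zero.mp h0
  rw [← hBB]
  show B (B z) = 0
  rw [hBz, map_zero]

lemma sNorm_zero_of_Azero {A : H →L[ℂ] H} {z : H} (hz : A z = 0) : sNorm A z = 0 := by
  simp [sNorm, hz]

lemma aker_apply {A W : H →L[ℂ] H} (hA : A.IsPositive) (hW : ABounded A W) {z : H}
    (hz : A z = 0) : A (W z) = 0 := by
  obtain ⟨c, hc, h⟩ := hW
  apply aker hA
  have h1 : sNorm A z = 0 := sNorm_zero_of_Azero hz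
  have h2 := h z
  rw [h1, mul_zero] at h2
  exact le_antisymm h2 (Real.sqrt_nonneg _)

lemma acongr {A W : H →L[ℂ] H} (hA : A.IsPositive) (hW : ABounded A W) {u v : H}
    (h : A u = A v) : A (W u) = A (W v) := by
  have h0 : A (u - v) = 0 := by rw [map_sub, h, sub_self]
  have h2 := aker_apply hA hW h0
  rw [map_sub, map_sub] at h2
  exact sub_eq_zero.mp h2

lemma abounded_one (A : H →L[ℂ] H) : ABounded A 1 :=
  ⟨1, one_pos, fun x => by simp [ContinuousLinearMap.one_apply]⟩

lemma abounded_mul {A X Y : H →L[ℂ] H} (hX : ABounded A X) (hY : ABounded A Y) :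
    ABounded A (X * Y) := by
  obtain ⟨c, hc, h⟩ := hX
  obtain ⟨d, hd, h'⟩ := hY
  refine ⟨c * d, mul_pos hc hd, fun x => ?_⟩
  calc sNorm A ((X * Y) x) = sNorm A (X (Y x)) := rfl
  _ ≤ c * sNorm A (Y x) := h _
  _ ≤ c * (d * sNorm A x) := mul_le_mul_of_nonneg_left (h' x) hc.le
  _ = c * d * sNorm A x := by ring

lemma ainv_iff {A T : H →L[ℂ] H} : AInvertible A T ↔
    ∃ S : H →L[ℂ] H, ABounded A S ∧ (∀ x, A (T (S x)) = A x) ∧ (∀ x, A (S (T x)) = A x) := by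
  constructor
  · rintro ⟨S, hS, h1, h2⟩
    exact ⟨S, hS, fun x => by simpa using congrFun (congrArg DFunLike.coe h1) x,
      fun x => by simpa using congrFun (congrArg DFunLike.coe h2) x⟩
  · rintro ⟨S, hS, h1, h2⟩
    exact ⟨S, hS, ContinuousLinearMap.ext fun x => by simpa using h1 x,
      ContinuousLinearMap.ext fun x => by simpa using h2 x⟩

lemma ainv_left {A X Y : H →L[ℂ] H} (hA : A.IsPositive) (hX : ABounded A X)
    (hY : ABounded A Y) (hc : X * Y = Y * X) (h : AInvertible A (X * Y)) :
    AInvertible A X := by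
  obtain ⟨S, hS, h1, h2⟩ := ainv_iff.mp h
  have h1' : ∀ x, A (X (Y (S x))) = A x := fun x => h1 x
  have h2' : ∀ x, A (S (X (Y x))) = A x := fun x => h2 x
  have hop : X * (X * Y) = X * Y * X := by rw [hc, ← mul_assoc, hc]
  have hstep2 : ∀ w, X (X (Y w)) = X (Y (X w)) := fun w => by
    have := congrArg (fun (U : H →L[ℂ] H) => U w) hop
    simpa [ContinuousLinearMap.mul_apply] using this
  have hcw : ∀ w, Y (X w) = X (Y w) := fun w => by
    have := congrArg (fun (U : H →L[ℂ] H) => U w) hc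
    simpa [ContinuousLinearMap.mul_apply] using this.symm
  have comm : ∀ x, A (S (X x)) = A (X (S x)) := by
    intro x
    calc A (S (X x)) = A (S (X (X (Y (S x))))) :=
          acongr hA (abounded_mul hS hX) (h1' x).symm
    _ = A (S (X (Y (X (S x))))) := by rw [hstep2 (S x)]
    _ = A (X (S x)) := h2' (X (S x))
  refine ainv_iff.mpr ⟨Y * S, abounded_mul hY hS, fun x => h1' x, fun x => ?_⟩
  calc A ((Y * S) (X x)) = A (Y (S (X x))) := rfl
  _ = A (Y (X (S x))) := acongr hA hY (comm x)
  _ = A (X (Y (S x))) := by rw [hcw (S x)]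
  _ = A x := h1' x

lemma ainv_mul {A X Y : H →L[ℂ] H} (hA : A.IsPositive) (hX : ABounded A X)
    (h1 : AInvertible A X) (h2 : AInvertible A Y) : AInvertible A (X * Y) := by
  obtain ⟨SX, hSX, hx1, hx2⟩ := ainv_iff.mp h1
  obtain ⟨SY, hSY, hy1, hy2⟩ := ainv_iff.mp h2
  refine ainv_iff.mpr ⟨SY * SX, abounded_mul hSY hSX, fun x => ?_, fun x => ?_⟩
  · calc A ((X * Y) ((SY * SX) x)) = A (X (Y (SY (SX x)))) := rfl
    _ = A (X (SX x)) := acongr hA hX (hy1 (SX x))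
    _ = A x := hx1 x
  · calc A ((SY * SX) ((X * Y) x)) = A (SY (SX (X (Y x)))) := rfl
    _ = A (SY (Y x)) := acongr hA hSY (hx2 (Y x))
    _ = A x := hy2 x

lemma ainv_one (A : H →L[ℂ] H) : AInvertible A 1 :=
  ainv_iff.mpr ⟨1, abounded_one A, fun _ => rfl, fun _ => rfl⟩

lemma abounded_prod {A : H →L[ℂ] H} (L : List (H →L[ℂ] H))
    (hL : ∀ X ∈ L, ABounded A X) : ABounded A L.prod := by
  induction L with
  | nil => simpa using abounded_one A
  | cons X L ih =>
    rw [List.prod_cons]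
    exact abounded_mul (hL X (by simp)) (ih fun Y hY => hL Y (by simp [hY]))

lemma ainv_list {A : H →L[ℂ] H} (hA : A.IsPositive) (L : List (H →L[ℂ] H))
    (hL : ∀ X ∈ L, ABounded A X) (hcomm : ∀ X ∈ L, ∀ Y ∈ L, X * Y = Y * X) :
    AInvertible A L.prod ↔ ∀ X ∈ L, AInvertible A X := by
  induction L with
  | nil => simpa using ainv_one A
  | cons X L ih =>
    have hXb : ABounded A X := hL X (by simp)
    have hLb : ∀ Y ∈ L, ABounded A Y := fun Y hY => hL Y (by simp [hY])
    have hLc : ∀ Y ∈ L, ∀ Z ∈ L, Y * Z = Z * Y :=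
      fun Y hY Z hZ => hcomm Y (by simp [hY]) Z (by simp [hZ])
    have hpc : X * L.prod = L.prod * X :=
      Commute.list_prod_right L X fun Y hY =>
        hcomm X (List.mem_cons_self) Y (List.mem_cons_of_mem X hY)
    rw [List.prod_cons]
    constructor
    · intro h
      have hX : AInvertible A X := ainv_left hA hXb (abounded_prod L hLb) hpc h
      have hP : AInvertible A L.prod :=
        ainv_left hA (abounded_prod L hLb) hXb hpc.symm (by rwa [← hpc])
      intro Y hY
      rcases List.mem_cons.mp hY with h' | h'
      · exact h' ▸ hX
      · exact (ih hLb hLc).mp hP Y h'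
    · intro h
      exact ainv_mul hA hXb (h X (by simp))
        ((ih hLb hLc).mpr fun Y hY => h Y (by simp [hY]))

theorem stmt15 (A : H →L[ℂ] H) (hA : A.IsPositive) (hA0 : A ≠ 0) (n : ℕ)
    (T : Fin n → H →L[ℂ] H) (hT : ∀ i, ABounded A (T i))
    (hcomm : ∀ i j, T i * T j = T j * T i) :
    AInvertible A (List.ofFn T).prod ↔ ∀ i, AInvertible A (T i) := by
  rw [ainv_list hA (List.ofFn T)
    (fun X hX => by obtain ⟨i, rfl⟩ := List.mem_ofFn.mp hX; exact hT i)
    (fun X hX Y hY => by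
      obtain ⟨i, rfl⟩ := List.mem_ofFn.mp hX
      obtain ⟨j, rfl⟩ := List.mem_ofFn.mp hY
      exact hcomm i j)]
  constructor
  · intro h i
    exact h (T i) (by simp [List.mem_ofFn])
  · intro h X hX
    obtain ⟨i, rfl⟩ := List.mem_ofFn.mp hX
    exact h i
end
end

section
/- Let T be a bounded linear operator on H admitting an A-adjoint T^♯. If A T^♯ T = A T T^♯ and range(T T^♯) ⊆ closure(range A), then T^♯ T = T T^♯ (equality of operators, not merely after multiplication by A). -/
open ContinuousLinearMap Filter
open scoped ComplexOrder

noncomputable section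

variable {H : Type*} [NormedAddCommGroup H] [InnerProductSpace ℂ H] [CompleteSpace H]

theorem stmt18 (A T Tsharp : H →L[ℂ] H) (hA : A.IsPositive) (hA0 : A ≠ 0)
    (hadj : IsAAdjoint A T Tsharp)
    (hnormal : A ∘L Tsharp ∘L T = A ∘L T ∘L Tsharp)
    (hrange : Set.range (⇑(T ∘L Tsharp)) ⊆ closure (Set.range (⇑A))) :
    Tsharp ∘L T = T ∘L Tsharp := by
  ext x
  simp only [comp_apply]
  set z := Tsharp (T x) - T (Tsharp x) with hzdef
  have hAz : A z = 0 := by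
    have h := congrArg (fun S : H →L[ℂ] H => S x) hnormal
    simp only [comp_apply] at h
    simp [hzdef, map_sub, h]
  have hmem : z ∈ closure (Set.range (⇑A)) := by
    have hset : Set.range (⇑A) = ((LinearMap.range (A : H →ₗ[ℂ] H) : Submodule ℂ H) : Set H) := by
      ext w; simp [LinearMap.mem_range]
    rw [hset]
    have h1 : Tsharp (T x) ∈ (LinearMap.range (A : H →ₗ[ℂ] H)).topologicalClosure := by
      rw [← SetLike.mem_coe, Submodule.topologicalClosure_coe]
      exact hset ▸ hadj.2 ⟨T x, rfl⟩
    have h2 : T (Tsharp x) ∈ (LinearMap.range (A : H →ₗ[ℂ] H)).topologicalClosure := by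
      rw [← SetLike.mem_coe, Submodule.topologicalClosure_coe]
      exact hset ▸ hrange ⟨x, rfl⟩
    have h3 : z ∈ (LinearMap.range (A : H →ₗ[ℂ] H)).topologicalClosure := sub_mem h1 h2
    rw [← Submodule.topologicalClosure_coe]; exact h3
  have hAdj : ContinuousLinearMap.adjoint A = A := hA.isSelfAdjoint.adjoint_eq
  have horth : ∀ w ∈ closure (Set.range (⇑A)), (inner ℂ z w : ℂ) = 0 := by
    intro w hw
    have hcl : IsClosed {w : H | (inner ℂ z w : ℂ) = 0} :=
      isClosed_eq (Continuous.inner continuous_const continuous_id) continuous_const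
    refine closure_minimal ?_ hcl hw
    rintro _ ⟨v, rfl⟩
    have : (inner ℂ z (A v) : ℂ) = inner ℂ (A z) v := by
      rw [← hAdj, ContinuousLinearMap.adjoint_inner_left, hAdj]
    simp [this, hAz]
  have hz0 : z = 0 := by
    have := horth z hmem
    rwa [inner_self_eq_zero] at this
  exact sub_eq_zero.mp hz0
end
end

section
/- Let T be a bounded linear operator on H admitting an A-adjoint T^♯, and let T^♯♯ denote the A-adjoint of T^♯. If T is A-normal, then T^♯♯ T^♯ = T^♯ T^♯♯ (equality of operators, not merely after multiplication by A). -/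
open ContinuousLinearMap Filter
open scoped ComplexOrder

noncomputable section

variable {H : Type*} [NormedAddCommGroup H] [InnerProductSpace ℂ H] [CompleteSpace H]

theorem stmt19 (A T Tsharp Tss : H →L[ℂ] H) (hA : A.IsPositive) (hA0 : A ≠ 0)
    (hadj : IsAAdjoint A T Tsharp) (hadj2 : IsAAdjoint A Tsharp Tss)
    (hnormal : A ∘L Tsharp ∘L T = A ∘L T ∘L Tsharp) :
    Tss ∘L Tsharp = Tsharp ∘L Tss := by
  have hAsa : ContinuousLinearMap.adjoint A = A := hA.isSelfAdjoint.adjoint_eq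
  obtain ⟨h1, hr1⟩ := hadj
  obtain ⟨h2, hr2⟩ := hadj2
  have hsa : ContinuousLinearMap.adjoint Tsharp ∘L A = A ∘L T := by
    have := congrArg ContinuousLinearMap.adjoint h1
    simpa [ContinuousLinearMap.adjoint_comp, hAsa] using this
  have hss : A ∘L Tss = A ∘L T := h2.trans hsa
  have key : A ∘L (Tss ∘L Tsharp) = A ∘L (Tsharp ∘L Tss) := by
    calc A ∘L (Tss ∘L Tsharp) = (A ∘L Tss) ∘L Tsharp := by
          rw [ContinuousLinearMap.comp_assoc]
      _ = (A ∘L T) ∘L Tsharp := by rw [hss]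
      _ = A ∘L T ∘L Tsharp := ContinuousLinearMap.comp_assoc _ _ _
      _ = A ∘L Tsharp ∘L T := hnormal.symm
      _ = (A ∘L Tsharp) ∘L T := (ContinuousLinearMap.comp_assoc _ _ _).symm
      _ = (ContinuousLinearMap.adjoint T ∘L A) ∘L T := by rw [h1]
      _ = ContinuousLinearMap.adjoint T ∘L (A ∘L T) := ContinuousLinearMap.comp_assoc _ _ _
      _ = ContinuousLinearMap.adjoint T ∘L (A ∘L Tss) := by rw [hss]
      _ = (ContinuousLinearMap.adjoint T ∘L A) ∘L Tss := (ContinuousLinearMap.comp_assoc _ _ _).symm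
      _ = (A ∘L Tsharp) ∘L Tss := by rw [h1]
      _ = A ∘L (Tsharp ∘L Tss) := ContinuousLinearMap.comp_assoc _ _ _
  ext x
  set u := Tss (Tsharp x) with hu_def
  set v := Tsharp (Tss x) with hv_def
  have hAuv : A (u - v) = 0 := by
    have h := congrFun (congrArg (DFunLike.coe) key) x
    simp only [ContinuousLinearMap.comp_apply] at h
    simp [u, v, map_sub, h]
  have horth : ∀ w ∈ closure (Set.range (⇑A)), (inner ℂ w (u - v) : ℂ) = 0 := by
    intro w hw
    have hclosed : IsClosed {w : H | (inner ℂ w (u - v) : ℂ) = 0} :=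
      isClosed_eq (continuous_id.inner continuous_const) continuous_const
    refine closure_minimal ?_ hclosed hw
    rintro _ ⟨z, rfl⟩
    have hadjz : (inner ℂ (A z) (u - v) : ℂ) = inner ℂ z (A (u - v)) := by
      conv_lhs => rw [← hAsa]
      exact ContinuousLinearMap.adjoint_inner_left A (u - v) z
    simp only [Set.mem_setOf_eq, hadjz, hAuv, inner_zero_right]
  have hu : (inner ℂ u (u - v) : ℂ) = 0 := horth u (hr2 ⟨Tsharp x, rfl⟩)
  have hv : (inner ℂ v (u - v) : ℂ) = 0 := horth v (hr1 ⟨Tss x, rfl⟩)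
  have huv : (inner ℂ (u - v) (u - v) : ℂ) = 0 := by rw [inner_sub_left, hu, hv, sub_zero]
  have := inner_self_eq_zero.mp huv
  simpa [ContinuousLinearMap.comp_apply, u, v, sub_eq_zero] using this
end
end
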